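/- Let (M, d) be a pseudometric space, K a positive integer, μ ∈ M, and μ₁,…,μ_K independent (not necessarily identically distributed) M-valued random elements with max_{i} E[d(μ_i, μ)²] < ∞. Let δ ∈ (0,1) with K = ⌈8 log(1/δ)⌉, and let μ* almost surely minimize ν ↦ min_{I:|I|>K/2} max_{j∈I} d(μ_j, ν). Then P(d(μ*, μ) > 4·√(max_{i=1,…,K} E[d(μ_i, μ)²])) ≤ δ. -/

import Mathlib

open Finset MeasureTheory ProbabilityTheory

/-!
By Markov's inequality each estimator lies farther than `2r` from `μ0`, where
`r² = maxᵢ E[d(μᵢ, μ0)²]`, with probability at most `1/4`. The indicators of these events are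
independent and, once centred, `1/4`-sub-Gaussian, so Hoeffding's inequality at deviation `K/4`
bounds the probability that at least half of the estimators are far by `exp(-K/8) ≤ δ`.
Otherwise a strict majority lies within `2r` of `μ0`, so the objective at `μ0`, and hence at the
minimiser `μ*`, is at most `2r`; a strict majority attaining the objective at `μ*` meets the
majority near `μ0`, and the triangle inequality gives `d(μ*, μ0) ≤ 4r`.
-/

/-- The GROS objective: `ν ↦ min_{I ⊆ [K], |I| > K/2} max_{j ∈ I} d(μ_j, ν)`. -/
noncomputable def grosObj {M : Type*} [PseudoMetricSpace M] (K : ℕ)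
    (μs : Fin K → M) (ν : M) : ℝ :=
  ⨅ I : {I : Finset (Fin K) // K < 2 * I.card}, ⨆ j ∈ I.1, dist (μs j) ν

lemma measureReal_two_mul_lt_le_of_integral_sq_le {Ω : Type*} [MeasurableSpace Ω]
    {μ : Measure Ω} [IsFiniteMeasure μ] {f : Ω → ℝ} (hf : Integrable (fun ω => f ω ^ 2) μ)
    {r : ℝ} (hr : 0 ≤ r) (h : ∫ ω, f ω ^ 2 ∂μ ≤ r ^ 2) :
    μ.real {ω | 2 * r < f ω} ≤ 1 / 4 := by
  obtain rfl | hr := hr.eq_or_lt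
  · have hf0 : (fun ω => f ω ^ 2) =ᵐ[μ] 0 :=
      (integral_eq_zero_iff_of_nonneg (fun ω => sq_nonneg _) hf).mp
        (le_antisymm (by simpa using h) (integral_nonneg fun ω => sq_nonneg _))
    have hnull : μ {ω | 2 * 0 < f ω} = 0 := by
      rw [measure_eq_zero_iff_ae_notMem]
      filter_upwards [hf0] with ω hω hlt
      simp_all
    rw [measureReal_def, hnull]
    norm_num
  · have hmarkov := mul_meas_ge_le_integral_of_nonneg (ae_of_all μ fun ω => sq_nonneg (f ω)) hf
      (4 * r ^ 2)
    have hsub : {ω | 2 * r < f ω} ⊆ {ω | 4 * r ^ 2 ≤ f ω ^ 2} := fun ω (hω : 2 * r < f ω) => by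
      show 4 * r ^ 2 ≤ f ω ^ 2
      nlinarith
    calc μ.real {ω | 2 * r < f ω} ≤ μ.real {ω | 4 * r ^ 2 ≤ f ω ^ 2} := measureReal_mono hsub
      _ ≤ (∫ ω, f ω ^ 2 ∂μ) / (4 * r ^ 2) := (le_div_iff₀' (by positivity)).mpr hmarkov
      _ ≤ r ^ 2 / (4 * r ^ 2) := by gcongr
      _ = 1 / 4 := by field_simp

lemma measureReal_le_two_mul_card_mem_le_exp {ι Ω β : Type*} [Fintype ι] [MeasurableSpace Ω]
    [MeasurableSpace β] {μ : Measure Ω} [IsProbabilityMeasure μ] {X : ι → Ω → β}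
    (hX : ∀ i, Measurable (X i)) (hind : iIndepFun X μ) {B : Set β} [DecidablePred (· ∈ B)]
    (hB : MeasurableSet B) (hp : ∀ i, μ.real (X i ⁻¹' B) ≤ 1 / 4) :
    μ.real {ω | Fintype.card ι ≤ 2 * #{i | X i ω ∈ B}} ≤
      Real.exp (-((Fintype.card ι : ℝ) / 8)) := by
  set Y : ι → Ω → ℝ := fun i => B.indicator 1 ∘ X i
  have hYmeas : ∀ i, Measurable (Y i) := fun i => (measurable_one.indicator hB).comp (hX i)
  have hYind : iIndepFun Y μ := hind.comp _ fun _ => measurable_one.indicator hB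
  have hYint : ∀ i, μ[Y i] = μ.real (X i ⁻¹' B) := fun i => by
    change ∫ ω, (X i ⁻¹' B).indicator 1 ω ∂μ = _
    exact integral_indicator_one (hX i hB)
  have hsubG : ∀ i ∈ (univ : Finset ι),
      HasSubgaussianMGF (fun ω => Y i ω - μ[Y i]) ((‖(1 : ℝ) - 0‖₊ / 2) ^ 2) μ := fun i _ =>
    hasSubgaussianMGF_of_mem_Icc (hYmeas i).aemeasurable (ae_of_all _ fun ω => by
      simp only [Y, Function.comp_apply, Set.indicator_apply, Pi.one_apply]
      split_ifs <;> norm_num)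
  have hoeff := HasSubgaussianMGF.measure_sum_ge_le_of_iIndepFun
    (hYind.comp (fun i x => x - μ[Y i]) fun _ => measurable_id.sub_const _) hsubG
    (ε := (Fintype.card ι : ℝ) / 4) (by positivity)
  have hsum_eq_card : ∀ ω, ∑ i, Y i ω = #{i | X i ω ∈ B} := fun ω => by
    simp only [Y, Function.comp_apply, Set.indicator_apply, Pi.one_apply]
    rw [Finset.sum_boole]
  refine (measureReal_mono fun ω hω => ?_).trans (hoeff.trans_eq ?_)
  · have hω' : (Fintype.card ι : ℝ) ≤ 2 * #{i | X i ω ∈ B} := by exact_mod_cast hω.out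
    have hmean : ∑ i, μ[Y i] ≤ (Fintype.card ι : ℝ) / 4 := by
      calc ∑ i, μ[Y i] ≤ ∑ _i : ι, (1 / 4 : ℝ) :=
            Finset.sum_le_sum fun i _ => (hYint i).trans_le (hp i)
        _ = (Fintype.card ι : ℝ) / 4 := by simp [div_eq_mul_inv]
    simp only [Function.comp_apply, Finset.sum_sub_distrib, hsum_eq_card, Set.mem_ofPred_eq]
    linarith
  · have hvar :
        ((∑ _i : ι, (‖(1 : ℝ) - 0‖₊ / 2) ^ 2 : NNReal) : ℝ) = Fintype.card ι / 4 := by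
      norm_num [div_eq_mul_inv]
    rw [hvar, Real.exp_eq_exp]
    rcases eq_or_ne (Fintype.card ι : ℝ) 0 with h0 | h0
    · simp [h0]
    · field_simp
      ring

section grosObj

variable {M : Type*} [PseudoMetricSpace M] {K : ℕ} (μs : Fin K → M)

lemma grosObj_le_of_forall_dist_le {I : Finset (Fin K)} (hI : K < 2 * #I) {ν : M} {b : ℝ}
    (h : ∀ j ∈ I, dist (μs j) ν ≤ b) : grosObj K μs ν ≤ b := by
  obtain ⟨j, hj⟩ : I.Nonempty := Finset.card_pos.mp (by omega)
  have hb : 0 ≤ b := dist_nonneg.trans (h j hj)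
  refine (ciInf_le ⟨0, ?_⟩ ⟨I, hI⟩).trans ?_
  · rintro x ⟨I, rfl⟩
    exact Real.iSup_nonneg fun j => Real.iSup_nonneg fun _ => dist_nonneg
  · exact Real.iSup_le (fun j => Real.iSup_le (h j) hb) hb

lemma exists_forall_dist_le_grosObj (hK : 0 < K) (ν : M) :
    ∃ I : Finset (Fin K), K < 2 * #I ∧ ∀ j ∈ I, dist (μs j) ν ≤ grosObj K μs ν := by
  have : Nonempty {I : Finset (Fin K) // K < 2 * #I} := ⟨⟨univ, by simp; omega⟩⟩
  obtain ⟨I, hI⟩ := Finite.exists_min fun I : {I : Finset (Fin K) // K < 2 * #I} =>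
    ⨆ j ∈ I.1, dist (μs j) ν
  refine ⟨I.1, I.2, fun j hj => le_trans ?_ (le_ciInf hI)⟩
  calc dist (μs j) ν = ⨆ _ : j ∈ I.1, dist (μs j) ν :=
      (ciSup_pos (f := fun _ => dist (μs j) ν) hj).symm
    _ ≤ ⨆ j, ⨆ _ : j ∈ I.1, dist (μs j) ν :=
      le_ciSup (f := fun j => ⨆ _ : j ∈ I.1, dist (μs j) ν) (Set.finite_range _).bddAbove j

lemma dist_le_two_mul_of_forall_grosObj_le {μ0 ν : M} {s : ℝ}
    (hmin : ∀ ν', grosObj K μs ν ≤ grosObj K μs ν')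
    (hmaj : K < 2 * #{i | dist (μs i) μ0 ≤ s}) : dist ν μ0 ≤ 2 * s := by
  set G : Finset (Fin K) := {i | dist (μs i) μ0 ≤ s}
  have hGK : #G ≤ K := by simpa using Finset.card_le_univ G
  obtain ⟨I, hI, hIν⟩ := exists_forall_dist_le_grosObj μs (by omega) ν
  obtain ⟨j, hj⟩ : (G ∩ I).Nonempty := by
    rw [← Finset.card_pos]
    have := Finset.card_union_add_card_inter G I
    have : #(G ∪ I) ≤ K := by simpa using Finset.card_le_univ (G ∪ I)
    omega
  rw [Finset.mem_inter] at hj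
  have hjμ0 : dist (μs j) μ0 ≤ s := (Finset.mem_filter.mp hj.1).2
  have hjν : dist (μs j) ν ≤ s :=
    (hIν j hj.2).trans ((hmin μ0).trans (grosObj_le_of_forall_dist_le μs hmaj fun i hi =>
      (Finset.mem_filter.mp hi).2))
  calc dist ν μ0 ≤ dist (μs j) ν + dist (μs j) μ0 := dist_triangle_left _ _ _
    _ ≤ 2 * s := by linarith

lemma le_two_mul_card_lt_dist_of_forall_grosObj_le {μ0 ν : M} {s : ℝ}
    (hmin : ∀ ν', grosObj K μs ν ≤ grosObj K μs ν') (hfar : 2 * s < dist ν μ0) :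
    K ≤ 2 * #{i | s < dist (μs i) μ0} := by
  by_contra! hlt
  have hsplit := Finset.card_filter_add_card_filter_not (s := univ)
    (fun i => s < dist (μs i) μ0)
  simp only [not_lt, card_univ, Fintype.card_fin] at hsplit
  exact hfar.not_ge (dist_le_two_mul_of_forall_grosObj_le μs hmin (by omega))

end grosObj

theorem stmt8_general {Ω M : Type*} [MeasureSpace Ω] [IsProbabilityMeasure (ℙ : Measure Ω)]
    [PseudoMetricSpace M] [MeasurableSpace M] [BorelSpace M]
    (δ : ℝ) (hδ : δ ∈ Set.Ioo (0 : ℝ) 1)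
    (K : ℕ) (hKδ : K = ⌈8 * Real.log (1 / δ)⌉₊)
    (μ0 : M) (μs : Fin K → Ω → M) (hmeas : ∀ k, Measurable (μs k))
    (hind : iIndepFun μs ℙ)
    (hint : ∀ k, Integrable (fun ω => dist (μs k ω) μ0 ^ 2) ℙ)
    (μstar : Ω → M)
    (hmin : ∀ᵐ ω ∂ℙ, ∀ ν : M,
      grosObj K (fun k => μs k ω) (μstar ω) ≤ grosObj K (fun k => μs k ω) ν) :
    ℙ {ω | 4 * Real.sqrt (⨆ i : Fin K, ∫ ω', dist (μs i ω') μ0 ^ 2 ∂ℙ) <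
        dist (μstar ω) μ0} ≤ ENNReal.ofReal δ := by
  set r := Real.sqrt (⨆ i : Fin K, ∫ ω', dist (μs i ω') μ0 ^ 2 ∂ℙ)
  set B : Set M := {x | 2 * r < dist x μ0}
  have hmoment : ∀ i, ∫ ω, dist (μs i ω) μ0 ^ 2 ∂ℙ ≤ r ^ 2 := fun i => by
    rw [Real.sq_sqrt (Real.iSup_nonneg fun i => integral_nonneg fun _ => sq_nonneg _)]
    exact le_ciSup (f := fun i => ∫ ω, dist (μs i ω) μ0 ^ 2 ∂ℙ) (Set.finite_range _).bddAbove i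
  have hB : MeasurableSet B :=
    measurableSet_lt measurable_const (continuous_id.dist continuous_const).measurable
  have hbad : ∀ i, (ℙ : Measure Ω).real (μs i ⁻¹' B) ≤ 1 / 4 := fun i =>
    measureReal_two_mul_lt_le_of_integral_sq_le (hint i) (Real.sqrt_nonneg _) (hmoment i)
  have hδK : Real.exp (-((Fintype.card (Fin K) : ℝ) / 8)) ≤ δ := by
    have : 8 * Real.log (1 / δ) ≤ K := hKδ ▸ Nat.le_ceil _
    rw [← Real.exp_log hδ.1, Real.exp_le_exp, Fintype.card_fin]
    rw [one_div, Real.log_inv] at this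
    linarith
  have hfar_many_bad : ∀ᵐ ω ∂ℙ, 4 * r < dist (μstar ω) μ0 →
      Fintype.card (Fin K) ≤ 2 * #{i | μs i ω ∈ B} := by
    filter_upwards [hmin] with ω hω hfar
    rw [Fintype.card_fin]
    exact le_two_mul_card_lt_dist_of_forall_grosObj_le (fun k => μs k ω) hω (s := 2 * r)
      (by linarith)
  calc ℙ {ω | 4 * r < dist (μstar ω) μ0}
      ≤ ℙ {ω | Fintype.card (Fin K) ≤ 2 * #{i | μs i ω ∈ B}} := measure_mono_ae hfar_many_bad
    _ = ENNReal.ofReal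
          ((ℙ : Measure Ω).real {ω | Fintype.card (Fin K) ≤ 2 * #{i | μs i ω ∈ B}}) :=
        (ofReal_measureReal).symm
    _ ≤ ENNReal.ofReal δ := ENNReal.ofReal_le_ofReal <|
        (measureReal_le_two_mul_card_mem_le_exp hmeas hind hB hbad).trans hδK

/-- Unbalanced version of the sub-Gaussian aggregation theorem: with
`K = ⌈8 log(1/δ)⌉` independent (not necessarily identically distributed)
estimators, `P(d(μ*, μ) > 4√(max_i E[d(μ_i,μ)²])) ≤ δ`. -/
theorem stmt8 {Ω M : Type*} [MeasureSpace Ω] [IsProbabilityMeasure (ℙ : Measure Ω)]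
    [PseudoMetricSpace M] [MeasurableSpace M] [BorelSpace M]
    (δ : ℝ) (hδ : δ ∈ Set.Ioo (0 : ℝ) 1)
    (K : ℕ) (hKδ : K = ⌈8 * Real.log (1 / δ)⌉₊) (hKpos : 0 < K)
    (μ0 : M) (μs : Fin K → Ω → M) (hmeas : ∀ k, Measurable (μs k))
    (hind : iIndepFun μs ℙ)
    (hint : ∀ k, Integrable (fun ω => dist (μs k ω) μ0 ^ 2) ℙ)
    (μstar : Ω → M) (hμstar : Measurable μstar)
    (hmin : ∀ᵐ ω ∂ℙ, ∀ ν : M,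
      grosObj K (fun k => μs k ω) (μstar ω) ≤ grosObj K (fun k => μs k ω) ν) :
    ℙ {ω | 4 * Real.sqrt (⨆ i : Fin K, ∫ ω', dist (μs i ω') μ0 ^ 2 ∂ℙ) <
        dist (μstar ω) μ0} ≤ ENNReal.ofReal δ :=
  stmt8_general δ hδ K hKδ μ0 μs hmeas hind hint μstar hmin
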